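/- Fix 0 < γ_0 < γ_1 < 1 and 0 < δ < 1/2. There exists ε_0 > 0 (depending only on γ_0, γ_1, δ) such that for every p̂_0 ∈ [γ_0, γ_1], every α ∈ [δ, 1−δ], and every 0 < ε ≤ ε_0, the system of equations α p + (1−α) p̃ = p̂_0 and α φ(p) + (1−α) φ(p̃) = ε has a unique solution (p, p̃) ∈ (0,1)² with p > p̂_0. -/

import Mathlib

open Real Set

/-- `φ(p) = p log(p/p̂₀) + (1−p) log((1−p)/(1−p̂₀))`. -/
noncomputable def phi (q p : ℝ) : ℝ :=
  p * Real.log (p / q) + (1 - p) * Real.log ((1 - p) / (1 - q))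

/-!
Let `h` be the binary entropy. Eliminating `p̃ = (p̂₀ - α p) / (1 - α)` with the linear equation,
the affine parts of `φ` cancel and the second equation becomes `F(p) = ε` with
`F(p) = h(p̂₀) - α h(p) - (1 - α) h(p̃)`. On `[p̂₀, min 1 (p̂₀ / α)]`, where `p̃ ∈ [0, p̂₀]`,
`F' = α (h'(p̃) - h'(p)) > 0` because `h'` is decreasing and `p̃ < p̂₀ < p`. Moreover `F(p̂₀) = 0`,
and at the right end point `p = 1` or `p̃ = 0`, so `φ ≥ 0` gives
`F ≥ min(α, 1 - α) · min(-log p̂₀, -log (1 - p̂₀))`, which is bounded below uniformly in the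
parameters. The intermediate value theorem and strict monotonicity finish the proof.
-/

lemma mul_log_div_eq {x y : ℝ} (hy : y ≠ 0) : x * log (x / y) = x * log x - x * log y := by
  rcases eq_or_ne x 0 with rfl | hx
  · simp
  · rw [log_div hx hy]; ring

lemma phi_eq_binEntropy {q : ℝ} (hq₀ : q ≠ 0) (hq₁ : q ≠ 1) (p : ℝ) :
    phi q p = -binEntropy p - p * log q - (1 - p) * log (1 - q) := by
  rw [phi, binEntropy, mul_log_div_eq hq₀, mul_log_div_eq (sub_ne_zero.2 hq₁.symm), log_inv,
    log_inv]
  ring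

open InformationTheory in
lemma phi_nonneg {q p : ℝ} (hq₀ : 0 < q) (hq₁ : q < 1) (hp₀ : 0 ≤ p) (hp₁ : p ≤ 1) :
    0 ≤ phi q p := by
  have h1q : 0 < 1 - q := by linarith
  have hkl : phi q p = q * klFun (p / q) + (1 - q) * klFun ((1 - p) / (1 - q)) := by
    unfold phi klFun
    field_simp
    ring
  have h₁ := klFun_nonneg (div_nonneg hp₀ hq₀.le)
  have h₂ := klFun_nonneg (div_nonneg (sub_nonneg.2 hp₁) h1q.le)
  rw [hkl]
  positivity

@[simp] lemma phi_self (q : ℝ) : phi q q = 0 := by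
  rcases eq_or_ne q 0 with rfl | h0
  · simp [phi]
  rcases eq_or_ne q 1 with rfl | h1
  · simp [phi]
  simp [phi, h0, sub_ne_zero.2 (Ne.symm h1)]

@[simp] lemma phi_zero (q : ℝ) : phi q 0 = -log (1 - q) := by simp [phi]

@[simp] lemma phi_one (q : ℝ) : phi q 1 = -log q := by simp [phi]

/-- The `p̃` determined by `p` through `α p + (1 - α) p̃ = q`. -/
noncomputable def balancingParam (q α p : ℝ) : ℝ := (q - α * p) / (1 - α)

section

variable {q α : ℝ}

lemma mul_add_one_sub_mul_eq_iff (hα : α ≠ 1) {p r : ℝ} :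
    α * p + (1 - α) * r = q ↔ r = balancingParam q α p := by
  have : 1 - α ≠ 0 := sub_ne_zero.2 hα.symm
  rw [balancingParam, eq_div_iff this]
  constructor <;> intro h <;> linarith

lemma balancingParam_self (hα : α ≠ 1) : balancingParam q α q = q :=
  ((mul_add_one_sub_mul_eq_iff hα).1 (by ring)).symm

lemma balancingParam_div (hα₀ : α ≠ 0) : balancingParam q α (q / α) = 0 := by
  simp [balancingParam, mul_div_cancel₀ _ hα₀]

lemma strictAnti_balancingParam (hα₀ : 0 < α) (hα₁ : α < 1) :
    StrictAnti (balancingParam q α) := fun a b hab => by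
  unfold balancingParam
  gcongr

noncomputable def mixedDivergence (q α p : ℝ) : ℝ :=
  α * phi q p + (1 - α) * phi q (balancingParam q α p)

lemma mixedDivergence_eq (hq₀ : q ≠ 0) (hq₁ : q ≠ 1) (hα : α ≠ 1) (p : ℝ) :
    mixedDivergence q α p =
      binEntropy q - α * binEntropy p - (1 - α) * binEntropy (balancingParam q α p) := by
  have h := (mul_add_one_sub_mul_eq_iff hα (q := q) (p := p)).2 rfl
  rw [mixedDivergence, phi_eq_binEntropy hq₀ hq₁, phi_eq_binEntropy hq₀ hq₁]
  simp only [binEntropy, log_inv]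
  linear_combination (log (1 - q) - log q) * h

lemma continuous_mixedDivergence (hq₀ : q ≠ 0) (hq₁ : q ≠ 1) (hα : α ≠ 1) :
    Continuous (mixedDivergence q α) := by
  rw [funext (mixedDivergence_eq hq₀ hq₁ hα)]
  unfold balancingParam
  fun_prop

lemma mixedDivergence_self (hα : α ≠ 1) : mixedDivergence q α q = 0 := by
  simp [mixedDivergence, balancingParam_self hα]

lemma hasDerivAt_mixedDivergence (hq₀ : q ≠ 0) (hq₁ : q ≠ 1) (hα : α ≠ 1) {p : ℝ}
    (hp₀ : p ≠ 0) (hp₁ : p ≠ 1) (hr₀ : balancingParam q α p ≠ 0)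
    (hr₁ : balancingParam q α p ≠ 1) :
    HasDerivAt (mixedDivergence q α)
      (α * ((log (1 - balancingParam q α p) - log (balancingParam q α p)) -
        (log (1 - p) - log p))) p := by
  have h1α : 1 - α ≠ 0 := sub_ne_zero.2 hα.symm
  have hr : HasDerivAt (balancingParam q α) (-α / (1 - α)) p :=
    ((((hasDerivAt_id p).const_mul α).const_sub q).div_const (1 - α)).congr_deriv (by ring)
  have := ((hasDerivAt_const p (binEntropy q)).sub
    ((hasDerivAt_binEntropy hp₀ hp₁).const_mul α)).sub
    (((hasDerivAt_binEntropy hr₀ hr₁).comp p hr).const_mul (1 - α))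
  rw [funext (mixedDivergence_eq hq₀ hq₁ hα)]
  exact this.congr_deriv (by field_simp; ring)

lemma balancingParam_mem_Ioo (hα₀ : 0 < α) (hα₁ : α < 1) {p : ℝ} (hp : p ∈ Ioo q (q / α)) :
    balancingParam q α p ∈ Ioo 0 q := by
  have h := strictAnti_balancingParam (q := q) hα₀ hα₁
  exact ⟨(balancingParam_div hα₀.ne').symm.trans_lt (h hp.2),
    (h hp.1).trans_eq (balancingParam_self hα₁.ne)⟩

lemma balancingParam_mem_Icc (hα₀ : 0 < α) (hα₁ : α < 1) {p : ℝ} (hp : p ∈ Icc q (q / α)) :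
    balancingParam q α p ∈ Icc 0 q := by
  have h := (strictAnti_balancingParam (q := q) hα₀ hα₁).antitone
  exact ⟨(balancingParam_div hα₀.ne').symm.trans_le (h hp.2),
    (h hp.1).trans_eq (balancingParam_self hα₁.ne)⟩

lemma strictMonoOn_mixedDivergence (hq₀ : 0 < q) (hq₁ : q < 1) (hα₀ : 0 < α) (hα₁ : α < 1) :
    StrictMonoOn (mixedDivergence q α) (Icc q (min 1 (q / α))) := by
  refine strictMonoOn_of_deriv_pos (convex_Icc _ _)
    (continuous_mixedDivergence hq₀.ne' hq₁.ne hα₁.ne).continuousOn fun x hx => ?_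
  rw [interior_Icc] at hx
  obtain ⟨hqx, hx1, hxα⟩ : q < x ∧ x < 1 ∧ x < q / α := ⟨hx.1, lt_min_iff.1 hx.2⟩
  obtain ⟨hr₀, hrq⟩ := balancingParam_mem_Ioo hα₀ hα₁ ⟨hqx, hxα⟩
  have hr₁ : balancingParam q α x < 1 := hrq.trans hq₁
  rw [(hasDerivAt_mixedDivergence hq₀.ne' hq₁.ne hα₁.ne (by linarith) hx1.ne hr₀.ne'
    hr₁.ne).deriv]
  have hlog : log (balancingParam q α x) < log x := log_lt_log hr₀ (hrq.trans hqx)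
  have hlog' : log (1 - x) < log (1 - balancingParam q α x) :=
    log_lt_log (by linarith) (by linarith)
  exact mul_pos hα₀ (by linarith)

lemma min_mul_min_neg_log_le_mixedDivergence (hq₀ : 0 < q) (hq₁ : q < 1) (hα₀ : 0 < α)
    (hα₁ : α < 1) :
    min α (1 - α) * min (-log q) (-log (1 - q)) ≤ mixedDivergence q α (min 1 (q / α)) := by
  have hlogq : 0 ≤ -log q := neg_nonneg.2 (log_nonpos hq₀.le hq₁.le)
  have hlogq' : 0 ≤ -log (1 - q) := neg_nonneg.2 (log_nonpos (by linarith) (by linarith))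
  have hmin : 0 ≤ min (-log q) (-log (1 - q)) := le_min hlogq hlogq'
  rcases le_total (q / α) 1 with h | h
  · rw [min_eq_right h, mixedDivergence, balancingParam_div hα₀.ne', phi_zero]
    have : 0 ≤ phi q (q / α) := phi_nonneg hq₀ hq₁ (by positivity) h
    calc min α (1 - α) * min (-log q) (-log (1 - q)) ≤ (1 - α) * -log (1 - q) :=
          mul_le_mul (min_le_right _ _) (min_le_right _ _) hmin (by linarith)
      _ ≤ _ := by nlinarith
  · rw [min_eq_left h, mixedDivergence, phi_one]
    obtain ⟨hr₀, hrq⟩ := balancingParam_mem_Icc hα₀ hα₁ ⟨hq₁.le, h⟩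
    have : 0 ≤ phi q (balancingParam q α 1) := phi_nonneg hq₀ hq₁ hr₀ (by linarith)
    calc min α (1 - α) * min (-log q) (-log (1 - q)) ≤ α * -log q :=
          mul_le_mul (min_le_left _ _) (min_le_left _ _) hmin hα₀.le
      _ ≤ _ := by nlinarith

theorem existsUnique_of_lt_mixedDivergence {ε : ℝ} (hq₀ : 0 < q) (hq₁ : q < 1)
    (hα₀ : 0 < α) (hα₁ : α < 1) (hε : 0 < ε) (hεF : ε < mixedDivergence q α (min 1 (q / α))) :
    ∃! pq : ℝ × ℝ,
      pq.1 ∈ Ioo (0 : ℝ) 1 ∧ pq.2 ∈ Ioo (0 : ℝ) 1 ∧ q < pq.1 ∧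
      α * pq.1 + (1 - α) * pq.2 = q ∧ α * phi q pq.1 + (1 - α) * phi q pq.2 = ε := by
  have hq : q < min 1 (q / α) := lt_min hq₁ ((lt_div_iff₀ hα₀).2 (by nlinarith))
  obtain ⟨p, ⟨hqp, hp⟩, hFp⟩ := intermediate_value_Ioo hq.le
    (continuous_mixedDivergence hq₀.ne' hq₁.ne hα₁.ne).continuousOn
    (show ε ∈ Ioo _ _ from ⟨(mixedDivergence_self hα₁.ne).symm ▸ hε, hεF⟩)
  obtain ⟨hp1, hpα⟩ := lt_min_iff.1 hp
  obtain ⟨hr₀, hrq⟩ := balancingParam_mem_Ioo hα₀ hα₁ ⟨hqp, hpα⟩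
  refine ⟨(p, balancingParam q α p), ⟨⟨hq₀.trans hqp, hp1⟩, ⟨hr₀, hrq.trans hq₁⟩, hqp,
    (mul_add_one_sub_mul_eq_iff hα₁.ne).2 rfl, hFp⟩, ?_⟩
  rintro ⟨p', r'⟩ ⟨⟨-, hp'1⟩, ⟨hr'₀, -⟩, hqp', hsum, hdiv⟩
  obtain rfl : r' = balancingParam q α p' := (mul_add_one_sub_mul_eq_iff hα₁.ne).1 hsum
  have hp'α : p' ≤ q / α := by
    by_contra! h
    exact (strictAnti_balancingParam hα₀ hα₁ h).not_gt (balancingParam_div hα₀.ne' ▸ hr'₀)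
  have : p' = p := (strictMonoOn_mixedDivergence hq₀ hq₁ hα₀ hα₁).injOn
    ⟨hqp'.le, le_min hp'1.le hp'α⟩ ⟨hqp.le, hp.le⟩ (hdiv.trans hFp.symm)
  rw [this]

end

theorem exists_unique_change_of_measure_params_general
    (γ0 γ1 δ : ℝ) (hγ0 : 0 < γ0) (hγ01 : γ0 < γ1) (hγ1 : γ1 < 1)
    (hδ : 0 < δ) :
    ∃ ε0 : ℝ, 0 < ε0 ∧
      ∀ p0 ∈ Set.Icc γ0 γ1, ∀ α ∈ Set.Icc δ (1 - δ), ∀ ε : ℝ, 0 < ε → ε ≤ ε0 →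
        ∃! pq : ℝ × ℝ,
          pq.1 ∈ Set.Ioo (0 : ℝ) 1 ∧ pq.2 ∈ Set.Ioo (0 : ℝ) 1 ∧ p0 < pq.1 ∧
          α * pq.1 + (1 - α) * pq.2 = p0 ∧
          α * phi p0 pq.1 + (1 - α) * phi p0 pq.2 = ε := by
  set m := min (-log γ1) (-log (1 - γ0))
  have hm : 0 < m := lt_min (neg_pos.2 (log_neg (hγ0.trans hγ01) hγ1))
    (neg_pos.2 (log_neg (by linarith) (by linarith)))
  refine ⟨δ * m / 2, by positivity, ?_⟩
  rintro p0 ⟨hγ0p, hpγ1⟩ α ⟨hδα, hαδ⟩ ε hε hεle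
  have hp0 : 0 < p0 := hγ0.trans_le hγ0p
  have hp1 : p0 < 1 := hpγ1.trans_lt hγ1
  have hα₀ : 0 < α := hδ.trans_le hδα
  have hα₁ : α < 1 := by linarith
  refine existsUnique_of_lt_mixedDivergence hp0 hp1 hα₀ hα₁ hε ?_
  calc ε < δ * m := by linarith [mul_pos hδ hm]
    _ ≤ min α (1 - α) * min (-log p0) (-log (1 - p0)) := by
        gcongr
        · exact le_min hδα (by linarith)
        · exact min_le_min (neg_le_neg (log_le_log hp0 hpγ1))
            (neg_le_neg (log_le_log (by linarith) (by linarith)))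
    _ ≤ _ := min_mul_min_neg_log_le_mixedDivergence hp0 hp1 hα₀ hα₁

/-- Existence and uniqueness of the change-of-measure parameters of (6.3): for
`p̂₀ ∈ [γ₀, γ₁]`, `α ∈ [δ, 1−δ]` and all small enough `ε > 0`, the system
`α p + (1−α) p̃ = p̂₀`, `α φ(p) + (1−α) φ(p̃) = ε` has a unique solution
`(p, p̃) ∈ (0,1)²` with `p > p̂₀`. -/
theorem exists_unique_change_of_measure_params
    (γ0 γ1 δ : ℝ) (hγ0 : 0 < γ0) (hγ01 : γ0 < γ1) (hγ1 : γ1 < 1)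
    (hδ : 0 < δ) (hδ' : δ < 1 / 2) :
    ∃ ε0 : ℝ, 0 < ε0 ∧
      ∀ p0 ∈ Set.Icc γ0 γ1, ∀ α ∈ Set.Icc δ (1 - δ), ∀ ε : ℝ, 0 < ε → ε ≤ ε0 →
        ∃! pq : ℝ × ℝ,
          pq.1 ∈ Set.Ioo (0 : ℝ) 1 ∧ pq.2 ∈ Set.Ioo (0 : ℝ) 1 ∧ p0 < pq.1 ∧
          α * pq.1 + (1 - α) * pq.2 = p0 ∧
          α * phi p0 pq.1 + (1 - α) * phi p0 pq.2 = ε :=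
  exists_unique_change_of_measure_params_general γ0 γ1 δ hγ0 hγ01 hγ1 hδ
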